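/- arXiv:2311.04140 — 3 statements merged into one kernel-verified Lean document; each statement's English description precedes it below -/
import Mathlib

section
/- In an alternating base tree T, for any vertex v ≠ f with parent p(v), dist^{γ(p(v))}(p(v)) < dist^{γ(v)}(v). Consequently, for any proper descendant v of a vertex u in T, dist^{γ(u)}(u) < dist^{γ(v)}(v). -/
open Classical

namespace AltMatch

variable {V : Type*}

/-- `M` is a matching of `G`: a set of edges of `G` that pairwise share no vertex. -/
def IsMatching (G : SimpleGraph V) (M : Set (Sym2 V)) : Prop :=
  M ⊆ G.edgeSet ∧ ∀ e₁ ∈ M, ∀ e₂ ∈ M, e₁ ≠ e₂ → ∀ v : V, v ∈ e₁ → v ∉ e₂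

/-- `v` is unmatched by `M`. -/
def Unmatched (M : Set (Sym2 V)) (v : V) : Prop := ∀ e ∈ M, v ∉ e

/-- A walk is alternating (starting with a non-matching edge):
its `i`-th edge is in `M` iff `i` is odd. -/
def Alt {G : SimpleGraph V} {u v : V} (M : Set (Sym2 V)) (w : G.Walk u v) : Prop :=
  ∀ (i : ℕ) (h : i < w.edges.length), (w.edges.get ⟨i, h⟩ ∈ M ↔ i % 2 = 1)

/-- An alternating path (w.r.t. `M`) from `u` to `v`. -/
def IsAltPath (G : SimpleGraph V) (M : Set (Sym2 V)) {u v : V} (w : G.Walk u v) : Prop :=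
  w.IsPath ∧ Alt M w

/-- Parity of a natural number as a `Bool` (`true` = odd). -/
def parityOf (n : ℕ) : Bool := decide (n % 2 = 1)

/-- `altDist G M θ f v` : minimum length of an alternating path from `f` to `v`
of parity `θ` (`true` = odd), or `⊤` if none exists. -/
noncomputable def altDist (G : SimpleGraph V) (M : Set (Sym2 V)) (θ : Bool) (f v : V) : ℕ∞ :=
  sInf {n : ℕ∞ | ∃ w : G.Walk f v, IsAltPath G M w ∧ parityOf w.length = θ ∧ (w.length : ℕ∞) = n}

/-- `gam G M f v` : the parity of the shortest alternating path from `f` to `v`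
(`true` = odd). -/
noncomputable def gam (G : SimpleGraph V) (M : Set (Sym2 V)) (f v : V) : Bool :=
  if altDist G M true f v < altDist G M false f v then true else false

/-- `w` is a shortest `θ`-alternating path from `f` to `v`. -/
def IsShortestAlt (G : SimpleGraph V) (M : Set (Sym2 V)) (θ : Bool) (f v : V)
    (w : G.Walk f v) : Prop :=
  IsAltPath G M w ∧ parityOf w.length = θ ∧ (w.length : ℕ∞) = altDist G M θ f v

/-- An `M`-augmenting path: an alternating path of odd length between two distinct
unmatched vertices. -/
def IsAugPath (G : SimpleGraph V) (M : Set (Sym2 V)) {a b : V} (w : G.Walk a b) : Prop :=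
  a ≠ b ∧ Unmatched M a ∧ Unmatched M b ∧ IsAltPath G M w ∧ w.length % 2 = 1

/-- `μ(G)` : the maximum size of a matching of `G`. -/
noncomputable def matchingNumber (G : SimpleGraph V) : ℕ :=
  sSup {n : ℕ | ∃ M : Set (Sym2 V), IsMatching G M ∧ M.Finite ∧ M.ncard = n}

/-- An alternating base tree for `G`, `M`, `f`: a spanning tree of `G` rooted at `f`
(encoded by its parent function) such that for every `v ≠ f` with parent `u`,
`dist^{γ(v)}(v) = dist^{γ̄(v)}(u) + 1`. -/
structure AltBaseTree (G : SimpleGraph V) (M : Set (Sym2 V)) (f : V) where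
  parent : V → V
  parent_root : parent f = f
  parent_adj : ∀ v, v ≠ f → G.Adj (parent v) v
  parent_reaches : ∀ v, ∃ n : ℕ, parent^[n] v = f
  dist_eq : ∀ v, v ≠ f →
    altDist G M (gam G M f v) f v = altDist G M (!gam G M f v) f (parent v) + 1

namespace AltBaseTree

variable {G : SimpleGraph V} {M : Set (Sym2 V)} {f : V}

/-- `v` belongs to the subtree `T_t` of `T` rooted at `t` (`t` is an ancestor-or-self
of `v`). -/
def InSubtree (T : AltBaseTree G M f) (t v : V) : Prop := ∃ n : ℕ, T.parent^[n] v = t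

/-- `e` is an edge of the tree `T`. -/
def IsTreeEdge (T : AltBaseTree G M f) (e : Sym2 V) : Prop :=
  ∃ v, v ≠ f ∧ e = s(T.parent v, v)

/-- `e` is an outgoing edge of the subtree `T_t`: a non-tree edge of `G` with exactly
one endpoint inside `T_t`. -/
def IsOutgoing (T : AltBaseTree G M f) (t : V) (e : Sym2 V) : Prop :=
  e ∈ G.edgeSet ∧ ¬ T.IsTreeEdge e ∧
    ∃ x y : V, e = s(x, y) ∧ ¬ T.InSubtree t x ∧ T.InSubtree t y

end AltBaseTree

/-- Matching-parity of an edge: `true` (odd) iff `e ∈ M`. -/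
noncomputable def rho (M : Set (Sym2 V)) (e : Sym2 V) : Bool :=
  if e ∈ M then true else false

/-- Sum-level of an edge `e = {x,y}` : `dist^{ρ(e)}(x) + dist^{ρ(e)}(y)`. -/
noncomputable def levelSum (G : SimpleGraph V) (M : Set (Sym2 V)) (f : V) (e : Sym2 V) : ℕ∞ :=
  Sym2.lift ⟨fun x y => altDist G M (rho M e) f x + altDist G M (rho M e) f y,
    fun x y => add_comm _ _⟩ e

/-- Max-level of an edge `e = {x,y}` : `max (dist^{ρ(e)}(x)) (dist^{ρ(e)}(y))`. -/
noncomputable def levelMax (G : SimpleGraph V) (M : Set (Sym2 V)) (f : V) (e : Sym2 V) : ℕ∞ :=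
  Sym2.lift ⟨fun x y => max (altDist G M (rho M e) f x) (altDist G M (rho M e) f y),
    fun x y => max_comm _ _⟩ e

/-- The level of an edge: `(0,0)` for tree edges, and the lexicographic pair
`(sum-level, max-level)` otherwise. -/
noncomputable def level {G : SimpleGraph V} {M : Set (Sym2 V)} {f : V}
    (T : AltBaseTree G M f) (e : Sym2 V) : Lex (ℕ∞ × ℕ∞) :=
  if T.IsTreeEdge e then toLex ((0 : ℕ∞), (0 : ℕ∞))
  else toLex (levelSum G M f e, levelMax G M f e)

/-- The level of a walk: the maximum level of its edges. -/
noncomputable def walkLevel {G : SimpleGraph V} {M : Set (Sym2 V)} {f : V}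
    (T : AltBaseTree G M f) {a b : V} (w : G.Walk a b) : Lex (ℕ∞ × ℕ∞) :=
  (w.edges.map (level T)).foldr max (toLex ((0 : ℕ∞), (0 : ℕ∞)))

/-- `out` assigns to each vertex `v` (whose subtree has an outgoing edge) a
minimum-level outgoing edge of `T_v`. -/
def IsMOE {G : SimpleGraph V} {M : Set (Sym2 V)} {f : V}
    (T : AltBaseTree G M f) (out : V → Sym2 V) : Prop :=
  ∀ v, (∃ e, T.IsOutgoing v e) →
    T.IsOutgoing v (out v) ∧ ∀ e, T.IsOutgoing v e → level T (out v) ≤ level T e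

/-- Canonical tie-breaking rule for MOEs: if a minimum-level outgoing edge of `T_v`
incident to `v` exists, then `out v` is incident to `v`. -/
def CanonicalTie {G : SimpleGraph V} {M : Set (Sym2 V)} {f : V}
    (T : AltBaseTree G M f) (out : V → Sym2 V) : Prop :=
  ∀ v e, T.IsOutgoing v e → (∀ e', T.IsOutgoing v e' → level T e ≤ level T e') →
    v ∈ e → v ∈ out v

/-- Level of `out v`, with the virtual value `(∞,∞)` when `T_v` has no outgoing edge. -/
noncomputable def outLevel {G : SimpleGraph V} {M : Set (Sym2 V)} {f : V}
    (T : AltBaseTree G M f) (out : V → Sym2 V) (v : V) : Lex (ℕ∞ × ℕ∞) :=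
  if ∃ e, T.IsOutgoing v e then level T (out v) else toLex ((⊤ : ℕ∞), (⊤ : ℕ∞))

/-- `P` is a `θ`-extension of the pair `(s,t)`: a shortest `θ`-alternating path from
`f` to `t` passing through `s` with `level(P) < level(out(s))`. -/
def IsExtension {G : SimpleGraph V} {M : Set (Sym2 V)} {f : V}
    (T : AltBaseTree G M f) (out : V → Sym2 V) (θ : Bool) (s : V) {t : V}
    (P : G.Walk f t) : Prop :=
  IsShortestAlt G M θ f t P ∧ s ∈ P.support ∧ walkLevel T P < outLevel T out s

/-- `Q` is a `θ`-extendable path from `s` to `t`: the suffix `P[s,t]` of some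
`θ`-extension `P` of `(s,t)`. -/
def IsExtendablePath [DecidableEq V] {G : SimpleGraph V} {M : Set (Sym2 V)} {f : V}
    (T : AltBaseTree G M f) (out : V → Sym2 V) (θ : Bool) {s t : V}
    (Q : G.Walk s t) : Prop :=
  ∃ (P : G.Walk f t) (hs : s ∈ P.support), IsExtension T out θ s P ∧ P.dropUntil s hs = Q

end AltMatch

open AltMatch

namespace AltMatch

variable {V : Type*} {G : SimpleGraph V} {M : Set (Sym2 V)} {f : V}

theorem altDist_gam_eq_min (v : V) :
    altDist G M (gam G M f v) f v = min (altDist G M true f v) (altDist G M false f v) := by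
  unfold gam
  split_ifs with h
  · exact (min_eq_left h.le).symm
  · exact (min_eq_right (not_lt.mp h)).symm

theorem altDist_gam_le (θ : Bool) (v : V) :
    altDist G M (gam G M f v) f v ≤ altDist G M θ f v := by
  rw [altDist_gam_eq_min]
  cases θ
  · exact min_le_right _ _
  · exact min_le_left _ _

theorem altDist_gam_ne_top {v : V}
    (hv : altDist G M true f v ≠ ⊤ ∨ altDist G M false f v ≠ ⊤) :
    altDist G M (gam G M f v) f v ≠ ⊤ := by
  rw [altDist_gam_eq_min, Ne, min_eq_top]
  tauto

namespace AltBaseTree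

theorem altDist_gam_parent_lt (T : AltBaseTree G M f) {v : V} (hv : v ≠ f)
    (hfin : altDist G M (gam G M f (T.parent v)) f (T.parent v) ≠ ⊤) :
    altDist G M (gam G M f (T.parent v)) f (T.parent v) < altDist G M (gam G M f v) f v := by
  rw [T.dist_eq v hv, ENat.lt_add_one_iff' hfin]
  exact altDist_gam_le _ _

theorem InSubtree.lt_of_ne {α : Type*} [Preorder α] {T : AltBaseTree G M f} {φ : V → α}
    (hφ : ∀ v, v ≠ f → φ (T.parent v) < φ v) {u v : V} (huv : T.InSubtree u v) (hvu : v ≠ u) :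
    φ u < φ v := by
  obtain ⟨n, hn⟩ := huv
  induction n generalizing v with
  | zero => exact absurd hn hvu
  | succ n ih =>
    have hvf : v ≠ f := by
      rintro rfl
      exact hvu ((Function.iterate_fixed T.parent_root (n + 1)).symm.trans hn)
    rw [Function.iterate_succ_apply] at hn
    by_cases hpu : T.parent v = u
    · exact hpu ▸ hφ v hvf
    · exact (ih hpu hn).trans (hφ v hvf)

end AltBaseTree

end AltMatch

theorem altBaseTree_dist_strict_mono_general
    {V : Type*} (G : SimpleGraph V) (M : Set (Sym2 V))
    (f : V)
    (hreach : ∀ v : V, altDist G M true f v ≠ ⊤ ∨ altDist G M false f v ≠ ⊤)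
    (T : AltBaseTree G M f) :
    (∀ v : V, v ≠ f →
      altDist G M (gam G M f (T.parent v)) f (T.parent v) <
        altDist G M (gam G M f v) f v) ∧
    (∀ u v : V, v ≠ u → T.InSubtree u v →
      altDist G M (gam G M f u) f u < altDist G M (gam G M f v) f v) := by
  have hparent : ∀ v : V, v ≠ f →
      altDist G M (gam G M f (T.parent v)) f (T.parent v) < altDist G M (gam G M f v) f v :=
    fun v hv => T.altDist_gam_parent_lt hv (altDist_gam_ne_top (hreach _))
  exact ⟨hparent, fun u v hvu huv =>
    huv.lt_of_ne (φ := fun w => altDist G M (gam G M f w) f w) hparent hvu⟩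

/-- In an alternating base tree, the shortest-alternating-path distance strictly
increases from parent to child, and hence from any vertex to its proper descendants. -/
theorem altBaseTree_dist_strict_mono
    {V : Type*} [Fintype V] [DecidableEq V] (G : SimpleGraph V) (M : Set (Sym2 V))
    (f : V) (hM : IsMatching G M) (hf : Unmatched M f)
    (hreach : ∀ v : V, altDist G M true f v ≠ ⊤ ∨ altDist G M false f v ≠ ⊤)
    (T : AltBaseTree G M f) :
    (∀ v : V, v ≠ f →
      altDist G M (gam G M f (T.parent v)) f (T.parent v) <
        altDist G M (gam G M f v) f v) ∧
    (∀ u v : V, v ≠ u → T.InSubtree u v →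
      altDist G M (gam G M f u) f u < altDist G M (gam G M f v) f v) :=
  altBaseTree_dist_strict_mono_general G M f hreach T
end

section
/- In an alternating base tree, for any vertex t with E*(T_t) ≠ ∅ and out(t) = {y_t, z_t} with z_t ∈ V(T_t), if dist^{ρ(t)}(y_t) ≤ dist^{ρ(t)}(z_t), then dist^{ρ̄(t)}(z_t) ≤ dist^{ρ(t)}(y_t) + 1, where ρ(t) = ρ(out(t)) and ρ̄(t) its opposite parity. -/
open Classical

open AltMatch

/-!
Take a shortest `ρ`-alternating path `P` from `f` to `y`. If `z` lies on `P`, the prefix of `P`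
ending at `z` is an alternating path strictly shorter than `P`; since `dist^ρ(y) ≤ dist^ρ(z)` its
parity cannot be `ρ`, so it witnesses `dist^ρ̄(z) < dist^ρ(y)`. Otherwise `P` followed by the edge
`yz` is an alternating path: `yz` has parity `ρ`, so it is a matching edge exactly when the index
`|P|` it gets is odd. This path has parity `ρ̄` and length `dist^ρ(y) + 1`.
-/

namespace AltMatch

variable {V : Type*} {G : SimpleGraph V} {M : Set (Sym2 V)}

theorem rho_eq_true_iff {e : Sym2 V} : rho M e = true ↔ e ∈ M := by
  unfold rho
  split_ifs <;> simp_all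

theorem parityOf_succ (n : ℕ) : parityOf (n + 1) = !parityOf n := by
  unfold parityOf
  rcases Nat.mod_two_eq_zero_or_one n with h | h <;> simp [Nat.add_mod, h]

theorem Alt.of_append_left {u v w : V} {p : G.Walk u v} {q : G.Walk v w}
    (h : Alt M (p.append q)) : Alt M p := by
  intro i hi
  have hi' : i < (p.append q).edges.length := by
    rw [SimpleGraph.Walk.edges_append, List.length_append]
    omega
  simpa [SimpleGraph.Walk.edges_append, List.getElem_append_left hi] using h i hi'

theorem Alt.takeUntil [DecidableEq V] {u v w : V} {p : G.Walk u v} (h : Alt M p)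
    (hw : w ∈ p.support) : Alt M (p.takeUntil w hw) :=
  Alt.of_append_left (q := p.dropUntil w hw) ((p.take_spec hw).symm ▸ h)

theorem Alt.concat {u v w : V} {p : G.Walk u v} (h : Alt M p) (hadj : G.Adj v w)
    (hvw : s(v, w) ∈ M ↔ p.length % 2 = 1) : Alt M (p.concat hadj) := by
  intro i hi
  simp only [SimpleGraph.Walk.edges_concat, List.concat_eq_append, List.length_append,
    List.length_singleton] at hi
  rcases Nat.lt_or_ge i p.edges.length with hlt | hge
  · simpa [SimpleGraph.Walk.edges_concat, List.getElem_append_left hlt] using h i hlt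
  · obtain rfl : i = p.edges.length := by omega
    simpa [SimpleGraph.Walk.edges_concat] using hvw

theorem altDist_le_length {θ : Bool} {f v : V} {w : G.Walk f v} (hw : IsAltPath G M w)
    (hθ : parityOf w.length = θ) : altDist G M θ f v ≤ w.length :=
  sInf_le ⟨w, hw, hθ, rfl⟩

theorem exists_isShortestAlt_of_altDist_ne_top {θ : Bool} {f v : V}
    (h : altDist G M θ f v ≠ ⊤) : ∃ w : G.Walk f v, IsShortestAlt G M θ f v w := by
  have hne : {n : ℕ∞ | ∃ w : G.Walk f v,
      IsAltPath G M w ∧ parityOf w.length = θ ∧ (w.length : ℕ∞) = n}.Nonempty := by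
    by_contra hempty
    exact h (by rw [altDist, Set.not_nonempty_iff_eq_empty.mp hempty, sInf_empty])
  obtain ⟨w, hw, hθ, hlen⟩ := csInf_mem hne
  exact ⟨w, hw, hθ, hlen⟩

theorem altDist_opp_lt_of_mem_support [DecidableEq V] {θ : Bool} {f y z : V}
    {P : G.Walk f y} (hP : IsShortestAlt G M θ f y P) (hz : z ∈ P.support) (hyz : y ≠ z)
    (hle : altDist G M θ f y ≤ altDist G M θ f z) :
    altDist G M (!θ) f z < altDist G M θ f y := by
  obtain ⟨⟨hpath, halt⟩, -, hlen⟩ := hP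
  have hsplit := congrArg SimpleGraph.Walk.length (P.take_spec hz)
  rw [SimpleGraph.Walk.length_append] at hsplit
  set Q := P.takeUntil z hz
  have hQ : IsAltPath G M Q := ⟨hpath.takeUntil hz, halt.takeUntil hz⟩
  have hQlt : (Q.length : ℕ∞) < altDist G M θ f y := by
    rw [← hlen, Nat.cast_lt]
    have hdrop : (P.dropUntil z hz).length ≠ 0 := fun h0 =>
      hyz (SimpleGraph.Walk.eq_of_length_eq_zero h0).symm
    omega
  have hparity : parityOf Q.length = !θ := by
    by_contra hne
    have hQθ : parityOf Q.length = θ := by simpa using hne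
    exact (hle.trans (altDist_le_length hQ hQθ)).not_gt hQlt
  exact (altDist_le_length hQ hparity).trans_lt hQlt

theorem altDist_opp_le_concat {θ : Bool} {f y z : V} {P : G.Walk f y}
    (hP : IsShortestAlt G M θ f y P) (hz : z ∉ P.support) (hadj : G.Adj y z)
    (hyzθ : s(y, z) ∈ M ↔ θ = true) :
    altDist G M (!θ) f z ≤ altDist G M θ f y + 1 := by
  obtain ⟨⟨hpath, halt⟩, hθ, hlen⟩ := hP
  have hW : IsAltPath G M (P.concat hadj) := by
    refine ⟨hpath.concat hz hadj, halt.concat hadj ?_⟩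
    rw [hyzθ, ← hθ, parityOf, decide_eq_true_iff]
  calc altDist G M (!θ) f z ≤ (P.concat hadj).length :=
        altDist_le_length hW (by rw [P.length_concat, parityOf_succ, hθ])
    _ = altDist G M θ f y + 1 := by rw [P.length_concat, ← hlen, Nat.cast_succ]

theorem altDist_opp_le_add_one_of_adj {θ : Bool} {f y z : V} (hadj : G.Adj y z)
    (hyzθ : s(y, z) ∈ M ↔ θ = true) (hle : altDist G M θ f y ≤ altDist G M θ f z) :
    altDist G M (!θ) f z ≤ altDist G M θ f y + 1 := by
  classical
  by_cases htop : altDist G M θ f y = ⊤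
  · simp [htop]
  obtain ⟨P, hP⟩ := exists_isShortestAlt_of_altDist_ne_top htop
  by_cases hz : z ∈ P.support
  · exact (altDist_opp_lt_of_mem_support hP hz hadj.ne hle).le.trans le_self_add
  · exact altDist_opp_le_concat hP hz hadj hyzθ

end AltMatch

theorem opp_parity_dist_of_zt_general
    {V : Type*} (G : SimpleGraph V) (M : Set (Sym2 V))
    (f : V)
    (T : AltBaseTree G M f) (out : V → Sym2 V) (hmoe : IsMOE T out)
    (t yt zt : V)
    (hstar : ∃ e, T.IsOutgoing t e ∧ levelSum G M f e ≠ ⊤)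
    (hout : out t = s(yt, zt))
    (hle : altDist G M (rho M (out t)) f yt ≤ altDist G M (rho M (out t)) f zt) :
    altDist G M (!rho M (out t)) f zt ≤ altDist G M (rho M (out t)) f yt + 1 := by
  obtain ⟨e, he, -⟩ := hstar
  have hadj : G.Adj yt zt := by
    simpa [hout] using (hmoe t ⟨e, he⟩).1.1
  exact altDist_opp_le_add_one_of_adj hadj (by rw [← hout, rho_eq_true_iff]) hle

/-- For `out(t) = {y_t, z_t}`, `z_t ∈ T_t`: if `dist^{ρ(t)}(y_t) ≤ dist^{ρ(t)}(z_t)`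
then `dist^{ρ̄(t)}(z_t) ≤ dist^{ρ(t)}(y_t) + 1`. -/
theorem opp_parity_dist_of_zt
    {V : Type*} [Fintype V] [DecidableEq V] (G : SimpleGraph V) (M : Set (Sym2 V))
    (f : V) (hM : IsMatching G M) (hf : Unmatched M f)
    (hreach : ∀ v : V, altDist G M true f v ≠ ⊤ ∨ altDist G M false f v ≠ ⊤)
    (T : AltBaseTree G M f) (out : V → Sym2 V) (hmoe : IsMOE T out)
    (t yt zt : V)
    (hstar : ∃ e, T.IsOutgoing t e ∧ levelSum G M f e ≠ ⊤)
    (hout : out t = s(yt, zt)) (hzt : T.InSubtree t zt) (hyt : ¬ T.InSubtree t yt)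
    (hle : altDist G M (rho M (out t)) f yt ≤ altDist G M (rho M (out t)) f zt) :
    altDist G M (!rho M (out t)) f zt ≤ altDist G M (rho M (out t)) f yt + 1 :=
  opp_parity_dist_of_zt_general G M f T out hmoe t yt zt hstar hout hle
end

section
/- Uniqueness of extendable path lengths: fix an alternating base tree T with canonical minimum outgoing edges out(·). For vertices s, t with s an ancestor of t in T and parity θ, call a pair (s,t) θ-extendable if there is a shortest θ-alternating path P from f to t with s ∈ V(P) and level(P) < level(out(s)); P[s,t] is then a θ-extendable path. Then for any θ-extendable pair (s,t), all θ-extendable paths from s to t have the same length. -/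
/-!
A θ-extension `P` of `(s, t)` lies strictly below the level of `out s`, so it uses no outgoing
edge of `T_s`: its only edge entering `T_s` is the tree edge from the parent of `s` to `s`.
As `t ∈ T_s` and `P` is a path, `P` stays outside `T_s` before `s` and inside `T_s` after it,
and alternation at that tree edge determines the parity of `|P[f, s]|`. Hence for two
extensions `P₁, P₂` the splice `P₁[f, s] ++ P₂[s, t]` is again a θ-alternating path from `f`
to `t`, and minimality of `P₂` gives `|P₂[f, s]| ≤ |P₁[f, s]|`. By symmetry the prefixes,
and so the suffixes, have equal length.
-/

open Classical

namespace SimpleGraph.Walk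

variable {V : Type*} {G : SimpleGraph V}

theorem length_takeUntil_add_length_dropUntil [DecidableEq V] {u v w : V} (p : G.Walk v w)
    (h : u ∈ p.support) : (p.takeUntil u h).length + (p.dropUntil u h).length = p.length := by
  rw [← length_append, take_spec]

theorem IsPath.append {u v w : V} {p : G.Walk u v} {q : G.Walk v w} (hp : p.IsPath)
    (hq : q.IsPath) (hpq : ∀ x ∈ p.support, x ∈ q.support → x = v) : (p.append q).IsPath := by
  have hq' := hq.support_nodup
  rw [← cons_tail_support, List.nodup_cons] at hq'
  rw [isPath_def, support_append, List.nodup_append']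
  refine ⟨hp.support_nodup, hq'.2, fun x hxp hxq => ?_⟩
  rw [hpq x hxp (List.mem_of_mem_tail hxq)] at hxq
  exact hq'.1 hxq

variable {S : Set V} {s a b : V}

theorem mem_support_of_enters_only_at (w : G.Walk a b)
    (hgate : ∀ d ∈ w.darts, d.fst ∉ S → d.snd ∈ S → d.snd = s) (ha : a ∉ S) (hb : b ∈ S) :
    s ∈ w.support := by
  obtain ⟨d, hd, hfst, hsnd⟩ := w.exists_boundary_dart Sᶜ ha (by simpa using hb)
  rw [← hgate d hd hfst (by simpa using hsnd)]
  exact w.dart_snd_mem_support_of_mem_darts hd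

variable [DecidableEq V]

theorem notMem_of_mem_support_takeUntil_of_enters_only_at {P : G.Walk a b}
    (hgate : ∀ d ∈ P.darts, d.fst ∉ S → d.snd ∈ S → d.snd = s) (ha : a ∉ S)
    (hs : s ∈ P.support) {v : V} (hv : v ∈ (P.takeUntil s hs).support) (hvs : v ≠ s) :
    v ∉ S := fun hvS =>
  notMem_support_takeUntil_support_takeUntil_subset hvs hs hv <|
    mem_support_of_enters_only_at _
      (fun d hd => hgate d (P.darts_takeUntil_subset_darts _ hd)) ha hvS

theorem IsPath.mem_of_mem_support_dropUntil_of_enters_only_at {P : G.Walk a b}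
    (hP : P.IsPath) (hgate : ∀ d ∈ P.darts, d.fst ∉ S → d.snd ∈ S → d.snd = s)
    (hsS : s ∈ S) (hb : b ∈ S) (hs : s ∈ P.support) {v : V}
    (hv : v ∈ (P.dropUntil s hs).support) : v ∈ S := by
  by_contra hvS
  set Q := P.dropUntil s hs
  have hsQ : s ∈ (Q.dropUntil v hv).support :=
    mem_support_of_enters_only_at _ (fun d hd => hgate d
      (P.darts_dropUntil_subset_darts _ (Q.darts_dropUntil_subset_darts _ hd))) hvS hb
  have hQ : ((Q.takeUntil v hv).append (Q.dropUntil v hv)).IsPath := by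
    rw [Q.take_spec hv]; exact hP.dropUntil hs
  exact hQ.ne_of_mem_support_of_append (fun h => hvS (h ▸ hsS))
    (Q.takeUntil v hv).start_mem_support hsQ rfl

end SimpleGraph.Walk

namespace AltMatch

open SimpleGraph

variable {V : Type*} {G : SimpleGraph V} {M : Set (Sym2 V)}

section Alternation

variable {u v w : V}

def AltFrom (M : Set (Sym2 V)) (k : ℕ) (p : G.Walk u v) : Prop :=
  ∀ (i : ℕ) (h : i < p.edges.length), (p.edges[i] ∈ M ↔ (k + i) % 2 = 1)

theorem alt_iff_altFrom_zero {p : G.Walk u v} : Alt M p ↔ AltFrom M 0 p := by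
  simp [Alt, AltFrom]

theorem AltFrom.of_mod_two_eq {k l : ℕ} {p : G.Walk u v} (hp : AltFrom M k p)
    (hkl : k % 2 = l % 2) : AltFrom M l p := by
  intro i hi
  rw [hp i hi]
  omega

theorem altFrom_append {k : ℕ} {p : G.Walk u v} {q : G.Walk v w} :
    AltFrom M k (p.append q) ↔ AltFrom M k p ∧ AltFrom M (k + p.length) q := by
  simp only [AltFrom, Walk.edges_append, List.length_append, ← p.length_edges]
  constructor
  · intro h
    refine ⟨fun i hi => ?_, fun i hi => ?_⟩
    · rw [← h i (by omega), List.getElem_append_left hi]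
    · rw [Nat.add_assoc, ← h (p.edges.length + i) (by omega),
        List.getElem_append_right (by omega)]
      simp only [Nat.add_sub_cancel_left]
  · rintro ⟨hp, hq⟩ i hi
    by_cases hip : i < p.edges.length
    · rw [List.getElem_append_left hip, hp i hip]
    · rw [List.getElem_append_right (by omega), hq _ (by omega)]
      omega

theorem Alt.append_of_mod_two_eq {u' w' : V} {p₁ : G.Walk u v} {q₁ : G.Walk v w}
    {p₂ : G.Walk u' v} {q₂ : G.Walk v w'} (h₁ : Alt M (p₁.append q₁)) (h₂ : Alt M (p₂.append q₂))
    (hlen : p₁.length % 2 = p₂.length % 2) : Alt M (p₁.append q₂) := by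
  rw [alt_iff_altFrom_zero, altFrom_append] at *
  exact ⟨h₁.1, h₂.2.of_mod_two_eq (by omega)⟩

theorem Alt.penultimate_edge_mem_iff {p : G.Walk u v} (hp : Alt M p) (hnil : ¬p.Nil) :
    s(p.penultimate, v) ∈ M ↔ p.length % 2 = 0 := by
  have hlen := Walk.not_nil_iff_lt_length.mp hnil
  have hlast := hp (p.edges.length - 1) (by rw [Walk.length_edges]; omega)
  simp only [List.get_eq_getElem] at hlast
  rw [Walk.mk_penultimate_end_eq_getLast_edges hnil, List.getLast_eq_getElem, hlast,
    Walk.length_edges]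
  omega

end Alternation

theorem IsShortestAlt.length_le {θ : Bool} {f t : V} {P W : G.Walk f t}
    (hP : IsShortestAlt G M θ f t P) (hW : IsAltPath G M W)
    (hpar : W.length % 2 = P.length % 2) : P.length ≤ W.length := by
  obtain ⟨-, hθ, hdist⟩ := hP
  have hWθ : parityOf W.length = θ := by rw [← hθ, parityOf, parityOf, hpar]
  have : altDist G M θ f t ≤ W.length := sInf_le ⟨W, hW, hWθ, rfl⟩
  exact_mod_cast hdist ▸ this

namespace AltBaseTree

variable {f : V} (T : AltBaseTree G M f)

theorem inSubtree_self (s : V) : T.InSubtree s s := ⟨0, rfl⟩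

theorem InSubtree.of_parent {T : AltBaseTree G M f} {s v : V}
    (h : T.InSubtree s (T.parent v)) : T.InSubtree s v := by
  obtain ⟨n, hn⟩ := h
  exact ⟨n + 1, by rwa [Function.iterate_succ_apply]⟩

theorem InSubtree.parent {T : AltBaseTree G M f} {s v : V} (h : T.InSubtree s v)
    (hvs : v ≠ s) : T.InSubtree s (T.parent v) := by
  obtain ⟨_ | n, hn⟩ := h
  · exact absurd hn hvs
  · exact ⟨n, by rwa [← Function.iterate_succ_apply]⟩

theorem eq_root_of_inSubtree_root {s : V} (h : T.InSubtree s f) : s = f := by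
  obtain ⟨n, hn⟩ := h
  rw [Function.iterate_fixed T.parent_root] at hn
  exact hn.symm

theorem eq_parent_of_walkLevel_lt {out : V → Sym2 V} (hmoe : IsMOE T out) {s a b : V}
    {P : G.Walk a b} (hlev : walkLevel T P < outLevel T out s) {x y : V}
    (he : s(x, y) ∈ P.edges) (hx : ¬T.InSubtree s x) (hy : T.InSubtree s y) :
    x = T.parent s ∧ y = s := by
  by_cases htree : T.IsTreeEdge s(x, y)
  · obtain ⟨v, -, hv⟩ := htree
    rcases Sym2.eq_iff.mp hv with ⟨rfl, rfl⟩ | ⟨rfl, rfl⟩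
    · by_cases hys : y = s
      · exact ⟨hys ▸ rfl, hys⟩
      · exact absurd (hy.parent hys) hx
    · exact absurd hy.of_parent hx
  · have hout : T.IsOutgoing s s(x, y) := ⟨P.edges_subset_edgeSet he, htree, x, y, rfl, hx, hy⟩
    have hlevel : level T s(x, y) ≤ walkLevel T P :=
      List.le_max_of_le' _ (List.mem_map_of_mem he) le_rfl
    have hmin : outLevel T out s ≤ level T s(x, y) := by
      rw [outLevel, if_pos ⟨_, hout⟩]
      exact (hmoe s ⟨_, hout⟩).2 _ hout
    exact absurd hlev (not_lt_of_ge (hmin.trans hlevel))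

end AltBaseTree

section Extension

variable {f : V} {T : AltBaseTree G M f} {out : V → Sym2 V} {θ : Bool} {s t : V}
  {P : G.Walk f t}

theorem IsExtension.length_eq {P₁ P₂ : G.Walk f t} (h₁ : IsExtension T out θ s P₁)
    (h₂ : IsExtension T out θ s P₂) : P₁.length = P₂.length := by
  have := h₁.1.2.2.trans h₂.1.2.2.symm
  exact_mod_cast this

theorem IsExtension.enters_subtree_only_at (hmoe : IsMOE T out) (hP : IsExtension T out θ s P) :
    ∀ d ∈ P.darts, d.fst ∉ {v | T.InSubtree s v} → d.snd ∈ {v | T.InSubtree s v} → d.snd = s :=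
  fun _ hd hfst hsnd =>
    (T.eq_parent_of_walkLevel_lt hmoe hP.2.2 (List.mem_map_of_mem hd) hfst hsnd).2

variable [DecidableEq V]

theorem IsExtension.not_inSubtree_of_mem_takeUntil (hmoe : IsMOE T out)
    (hP : IsExtension T out θ s P) (hs : s ∈ P.support) {v : V}
    (hv : v ∈ (P.takeUntil s hs).support) (hvs : v ≠ s) : ¬T.InSubtree s v := by
  obtain rfl | hsf := eq_or_ne s f
  · rw [Walk.takeUntil_first] at hv
    exact absurd (Walk.mem_support_nil_iff.mp hv) hvs
  · exact Walk.notMem_of_mem_support_takeUntil_of_enters_only_at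
      (hP.enters_subtree_only_at hmoe) (mt T.eq_root_of_inSubtree_root hsf) hs hv hvs

theorem IsExtension.inSubtree_of_mem_dropUntil (hmoe : IsMOE T out)
    (hP : IsExtension T out θ s P) (hst : T.InSubtree s t) (hs : s ∈ P.support) {v : V}
    (hv : v ∈ (P.dropUntil s hs).support) : T.InSubtree s v :=
  hP.1.1.1.mem_of_mem_support_dropUntil_of_enters_only_at (hP.enters_subtree_only_at hmoe)
    (T.inSubtree_self s) hst hs hv

theorem IsExtension.length_takeUntil_mod_two_eq_zero_iff (hmoe : IsMOE T out)
    (hP : IsExtension T out θ s P) (hs : s ∈ P.support) (hsf : s ≠ f) :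
    (P.takeUntil s hs).length % 2 = 0 ↔ s(T.parent s, s) ∈ M := by
  set A := P.takeUntil s hs
  have hnil : ¬A.Nil := by simpa [A] using hsf.symm
  have hpen : A.penultimate = T.parent s := by
    have hout : ¬T.InSubtree s A.penultimate :=
      hP.not_inSubtree_of_mem_takeUntil hmoe hs
        (List.mem_of_mem_dropLast (A.penultimate_mem_dropLast_support hnil))
        (A.adj_penultimate hnil).ne
    exact (T.eq_parent_of_walkLevel_lt hmoe hP.2.2
      (P.edges_takeUntil_subset_edges hs (A.mk_penultimate_end_mem_edges hnil))
      hout (T.inSubtree_self s)).1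
  have hA : Alt M A := by
    have h := hP.1.1.2
    rw [← P.take_spec hs, alt_iff_altFrom_zero, altFrom_append] at h
    exact alt_iff_altFrom_zero.mpr h.1
  rw [← hA.penultimate_edge_mem_iff hnil, hpen]

theorem IsExtension.length_takeUntil_mod_two_eq (hmoe : IsMOE T out) {P₁ P₂ : G.Walk f t}
    (h₁ : IsExtension T out θ s P₁) (h₂ : IsExtension T out θ s P₂)
    (hs₁ : s ∈ P₁.support) (hs₂ : s ∈ P₂.support) :
    (P₁.takeUntil s hs₁).length % 2 = (P₂.takeUntil s hs₂).length % 2 := by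
  obtain rfl | hsf := eq_or_ne s f
  · simp only [Walk.takeUntil_first]
  · have e₁ := h₁.length_takeUntil_mod_two_eq_zero_iff hmoe hs₁ hsf
    have e₂ := h₂.length_takeUntil_mod_two_eq_zero_iff hmoe hs₂ hsf
    have := e₁.trans e₂.symm
    omega

theorem IsExtension.length_takeUntil_le (hmoe : IsMOE T out) {P₁ P₂ : G.Walk f t}
    (h₁ : IsExtension T out θ s P₁) (h₂ : IsExtension T out θ s P₂) (hst : T.InSubtree s t)
    (hs₁ : s ∈ P₁.support) (hs₂ : s ∈ P₂.support) :
    (P₂.takeUntil s hs₂).length ≤ (P₁.takeUntil s hs₁).length := by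
  have hpath : ((P₁.takeUntil s hs₁).append (P₂.dropUntil s hs₂)).IsPath :=
    (h₁.1.1.1.takeUntil hs₁).append (h₂.1.1.1.dropUntil hs₂) fun x hx₁ hx₂ => by
      by_contra hxs
      exact h₁.not_inSubtree_of_mem_takeUntil hmoe hs₁ hx₁ hxs
        (h₂.inSubtree_of_mem_dropUntil hmoe hst hs₂ hx₂)
  have hpar := h₁.length_takeUntil_mod_two_eq hmoe h₂ hs₁ hs₂
  have halt : Alt M ((P₁.takeUntil s hs₁).append (P₂.dropUntil s hs₂)) :=
    Alt.append_of_mod_two_eq (by rw [P₁.take_spec hs₁]; exact h₁.1.1.2)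
      (by rw [P₂.take_spec hs₂]; exact h₂.1.1.2) hpar
  have hsplit₂ := P₂.length_takeUntil_add_length_dropUntil hs₂
  have hle := h₂.1.length_le ⟨hpath, halt⟩ (by rw [Walk.length_append]; omega)
  rw [Walk.length_append] at hle
  omega

end Extension

end AltMatch

open AltMatch

theorem extendable_paths_same_length_general
    {V : Type*} [DecidableEq V] (G : SimpleGraph V) (M : Set (Sym2 V))
    (f : V)
    (T : AltBaseTree G M f) (out : V → Sym2 V)
    (hmoe : IsMOE T out)
    (θ : Bool) (s t : V) (hanc : T.InSubtree s t) :
    ∀ (Q₁ Q₂ : G.Walk s t), IsExtendablePath T out θ Q₁ →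
      IsExtendablePath T out θ Q₂ → Q₁.length = Q₂.length := by
  rintro _ _ ⟨P₁, hs₁, h₁, rfl⟩ ⟨P₂, hs₂, h₂, rfl⟩
  have hle₁ := h₁.length_takeUntil_le hmoe h₂ hanc hs₁ hs₂
  have hle₂ := h₂.length_takeUntil_le hmoe h₁ hanc hs₂ hs₁
  have hsplit₁ := P₁.length_takeUntil_add_length_dropUntil hs₁
  have hsplit₂ := P₂.length_takeUntil_add_length_dropUntil hs₂
  have hlen := h₁.length_eq h₂
  omega

/-- Uniqueness of extendable path lengths: for a `θ`-extendable pair `(s,t)`, all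
`θ`-extendable paths from `s` to `t` have the same length. -/
theorem extendable_paths_same_length
    {V : Type*} [Fintype V] [DecidableEq V] (G : SimpleGraph V) (M : Set (Sym2 V))
    (f : V) (hM : IsMatching G M) (hf : Unmatched M f)
    (hreach : ∀ v : V, altDist G M true f v ≠ ⊤ ∨ altDist G M false f v ≠ ⊤)
    (T : AltBaseTree G M f) (out : V → Sym2 V)
    (hmoe : IsMOE T out) (htie : CanonicalTie T out)
    (θ : Bool) (s t : V) (hanc : T.InSubtree s t)
    (hext : ∃ P : G.Walk f t, IsExtension T out θ s P) :
    ∀ (Q₁ Q₂ : G.Walk s t), IsExtendablePath T out θ Q₁ →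
      IsExtendablePath T out θ Q₂ → Q₁.length = Q₂.length :=
  extendable_paths_same_length_general G M f T out hmoe θ s t hanc
end
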